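/- arXiv:1309.1185 — 2 statements merged into one kernel-verified Lean document; each statement's English description precedes it below -/
import Mathlib

section
/- Let a₁,…,aₙ be nonnegative integers and d a positive integer with 9−n > 0 for n ≤ 8. If ∑ aᵢ = 3d − 1 and ∑ aᵢ² = d² + 1, then (9−n)d² − 6d − (n−1) ≤ 0. In particular, if n ≤ 1 then d < 1; if n ≤ 4 then d < 2; if n ≤ 6 then d < 3; if n = 7 then d < 4; and if n = 8 then d < 7. -/
lemma odd_sq_ge (x : ℤ) : 1 ≤ (2*x - 5)^2 := by
  rcases le_or_gt x 2 with h | h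
  · nlinarith
  · nlinarith

/-- **Diophantine bound for lines on del Pezzo surfaces.**
Let `a₁,…,aₙ` be nonnegative integers (`n ≤ 8`) and `d` a positive integer with
`∑ aᵢ = 3d − 1` (encoded subtraction-free as `∑ aᵢ + 1 = 3d`) and `∑ aᵢ² = d² + 1`.
Then `(9−n)d² − 6d − (n−1) ≤ 0`, and in particular `d < 1` if `n ≤ 1`, `d < 2` if `n ≤ 4`,
`d < 3` if `n ≤ 6`, `d < 4` if `n = 7`, and `d < 7` if `n = 8`. -/
theorem stmt_0 (n : ℕ) (hn : n ≤ 8) (d : ℕ) (hd : 0 < d)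
    (a : Fin n → ℕ)
    (hsum : (∑ i, a i) + 1 = 3 * d)
    (hsq : ∑ i, (a i) ^ 2 = d ^ 2 + 1) :
    ((9 : ℤ) - (n : ℤ)) * (d : ℤ) ^ 2 - 6 * (d : ℤ) - ((n : ℤ) - 1) ≤ 0 ∧
    (n ≤ 1 → d < 1) ∧ (n ≤ 4 → d < 2) ∧ (n ≤ 6 → d < 3) ∧
    (n = 7 → d < 4) ∧ (n = 8 → d < 7) := by
  have hsum' : (∑ i, (a i : ℤ)) + 1 = 3 * (d : ℤ) := by exact_mod_cast hsum
  have hsq' : (∑ i, (a i : ℤ)^2) = (d : ℤ)^2 + 1 := by exact_mod_cast hsq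
  have hcs : (∑ i, (a i : ℤ))^2 ≤ (n : ℤ) * ∑ i, (a i : ℤ)^2 := by
    have := sq_sum_le_card_mul_sum_sq (s := (Finset.univ : Finset (Fin n)))
      (f := fun i => (a i : ℤ))
    simpa using this
  have hd' : (1 : ℤ) ≤ (d : ℤ) := by exact_mod_cast hd
  have hn' : (n : ℤ) ≤ 8 := by exact_mod_cast hn
  have main : ((9 : ℤ) - (n : ℤ)) * (d : ℤ) ^ 2 - 6 * (d : ℤ) - ((n : ℤ) - 1) ≤ 0 := by
    nlinarith [hcs, hsum', hsq']
  refine ⟨main, ?_, ?_, ?_, ?_, ?_⟩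
  · intro h; exfalso
    have : (n : ℤ) ≤ 1 := by exact_mod_cast h
    nlinarith
  · intro h
    have : (n : ℤ) ≤ 4 := by exact_mod_cast h
    by_contra hc
    have : (2 : ℤ) ≤ (d : ℤ) := by exact_mod_cast Nat.le_of_not_lt hc
    nlinarith
  · intro h
    have : (n : ℤ) ≤ 6 := by exact_mod_cast h
    by_contra hc
    have : (3 : ℤ) ≤ (d : ℤ) := by exact_mod_cast Nat.le_of_not_lt hc
    nlinarith
  · intro h
    have : (n : ℤ) = 7 := by exact_mod_cast h
    by_contra hc
    have : (4 : ℤ) ≤ (d : ℤ) := by exact_mod_cast Nat.le_of_not_lt hc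
    nlinarith
  · intro h
    subst h
    by_contra hc
    have h7 : (7 : ℤ) ≤ (d : ℤ) := by exact_mod_cast Nat.le_of_not_lt hc
    have hd7 : (d : ℤ) = 7 := by nlinarith
    -- parity argument: ∑ (2aᵢ − 5)² = 0 but each term ≥ 1
    have hzero : (∑ i, (2 * (a i : ℤ) - 5)^2) = 0 := by
      have : (∑ i, (2 * (a i : ℤ) - 5)^2)
          = 4 * (∑ i, (a i : ℤ)^2) - 20 * (∑ i, (a i : ℤ)) + 25 * 8 := by
        rw [Finset.mul_sum, Finset.mul_sum, ← Finset.sum_sub_distrib]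
        rw [show (25 : ℤ) * 8 = ∑ _i : Fin 8, 25 by simp, ← Finset.sum_add_distrib]
        apply Finset.sum_congr rfl
        intro i _; ring
      rw [this, hsq']
      have hS : (∑ i, (a i : ℤ)) = 20 := by omega
      rw [hS, hd7]; ring
    have hge : (8 : ℤ) ≤ ∑ i, (2 * (a i : ℤ) - 5)^2 := by
      calc (8 : ℤ) = ∑ _i : Fin 8, 1 := by simp
        _ ≤ _ := Finset.sum_le_sum fun i _ => odd_sq_ge (a i)
    omega
end

section
/- Let X be a ℚ-factorial variety and D, B effective ℚ-divisors with D ≡ B (ℚ-linearly equivalent) and D ≠ B. Suppose (X, B) is log canonical and (X, D) is not log canonical. Then there exists α ∈ [0,1) ∩ ℚ such that D' := (1/(1−α))(D − αB) is effective, (X, D') is not log canonical, and the support of D' does not contain at least one irreducible component of B. Moreover D' ≡ D. -/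
/-- **Removing a component of `B` from a non-log-canonical divisor `D`.**
Abstract formalization: `ι` indexes the prime divisors on a ℚ-factorial variety `X`,
so an (effective) ℚ-divisor is a finitely supported function `ι →₀ ℚ` (with nonnegative
values).  The submodule `N` consists of the ℚ-divisors that are ℚ-linearly equivalent
to `0`; no nonzero effective divisor is ℚ-linearly trivial (`hNeff`).  Log canonicality
is convex (`hconvex`, cf. the previous statement).  If `D ≡ B`, `D ≠ B`, `(X, B)` is
log canonical and `(X, D)` is not, then there is a rational `α ∈ [0,1)` such that
`D' = (1/(1−α))(D − αB)` is effective, `(X, D')` is not log canonical, the support of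
`D'` misses at least one irreducible component of `B`, and `D' ≡ D`. -/
theorem stmt_6 {ι : Type*}
    (logCanonical : (ι →₀ ℚ) → Prop)
    (hconvex : ∀ (W B' : ι →₀ ℚ) (t : ℚ), 0 ≤ t → t ≤ 1 →
      logCanonical W → logCanonical B' → logCanonical (t • W + (1 - t) • B'))
    (N : Submodule ℚ (ι →₀ ℚ))
    (hNeff : ∀ x ∈ N, (∀ i, 0 ≤ x i) → x = 0)
    (D B : ι →₀ ℚ)
    (hDeff : ∀ i, 0 ≤ D i) (hBeff : ∀ i, 0 ≤ B i)
    (hDB : D - B ∈ N) (hne : D ≠ B)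
    (hBlc : logCanonical B) (hDnlc : ¬ logCanonical D) :
    ∃ α : ℚ, 0 ≤ α ∧ α < 1 ∧
      (∀ i, 0 ≤ ((1 - α)⁻¹ • (D - α • B)) i) ∧
      ¬ logCanonical ((1 - α)⁻¹ • (D - α • B)) ∧
      (∃ i ∈ B.support, i ∉ ((1 - α)⁻¹ • (D - α • B)).support) ∧
      ((1 - α)⁻¹ • (D - α • B)) - D ∈ N := by

  -- `B` has nonempty support
  have hBne : B.support.Nonempty := by
    by_contra h
    rw [Finset.not_nonempty_iff_eq_empty, Finsupp.support_eq_empty] at h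
    subst h
    rw [sub_zero] at hDB
    exact hne (by simpa using hNeff D hDB hDeff)
  obtain ⟨i₀, hi₀, hmin⟩ := B.support.exists_min_image (fun i => D i / B i) hBne
  have hBi₀ : 0 < B i₀ := lt_of_le_of_ne (hBeff i₀) (Ne.symm (Finsupp.mem_support_iff.mp hi₀))
  set α : ℚ := D i₀ / B i₀ with hα
  have hα0 : 0 ≤ α := div_nonneg (hDeff i₀) hBi₀.le
  have hα1 : α < 1 := by
    by_contra h
    push_neg at h
    have heff : ∀ i, 0 ≤ (D - B) i := by
      intro i
      rw [Finsupp.sub_apply, sub_nonneg]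
      rcases eq_or_lt_of_le (hBeff i) with hb | hb
      · rw [← hb]; exact hDeff i
      · have := hmin i (Finsupp.mem_support_iff.mpr hb.ne')
        have : (1:ℚ) ≤ D i / B i := le_trans h this
        calc B i = 1 * B i := (one_mul _).symm
          _ ≤ (D i / B i) * B i := by
              exact mul_le_mul_of_nonneg_right this hb.le
          _ = D i := div_mul_cancel₀ _ hb.ne'
    exact hne (sub_eq_zero.mp (hNeff _ hDB heff))
  have h1α : (0:ℚ) < 1 - α := by linarith
  have heff' : ∀ i, 0 ≤ ((1 - α)⁻¹ • (D - α • B)) i := by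
    intro i
    rw [Finsupp.smul_apply, Finsupp.sub_apply, Finsupp.smul_apply]
    apply mul_nonneg (inv_nonneg.mpr h1α.le)
    rw [sub_nonneg, smul_eq_mul]
    rcases eq_or_lt_of_le (hBeff i) with hb | hb
    · rw [← hb, mul_zero]; exact hDeff i
    · have := hmin i (Finsupp.mem_support_iff.mpr hb.ne')
      calc α * B i ≤ (D i / B i) * B i := mul_le_mul_of_nonneg_right this hb.le
        _ = D i := div_mul_cancel₀ _ hb.ne'
  refine ⟨α, hα0, hα1, heff', ?_, ⟨i₀, hi₀, ?_⟩, ?_⟩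
  · intro hlc
    have := hconvex _ B (1 - α) h1α.le (by linarith) hlc hBlc
    have key : (1 - α) • ((1 - α)⁻¹ • (D - α • B)) + (1 - (1 - α)) • B = D := by
      rw [smul_smul, mul_inv_cancel₀ h1α.ne', one_smul]
      simp
    rw [key] at this
    exact hDnlc this
  · rw [Finsupp.notMem_support_iff, Finsupp.smul_apply, Finsupp.sub_apply,
      Finsupp.smul_apply, smul_eq_mul, smul_eq_mul, hα, div_mul_cancel₀ _ hBi₀.ne',
      sub_self, mul_zero]
  · have key : ((1 - α)⁻¹ • (D - α • B)) - D = ((1 - α)⁻¹ * α) • (D - B) := by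
      ext i
      simp only [Finsupp.sub_apply, Finsupp.smul_apply, smul_eq_mul]
      field_simp
      ring
    rw [key]
    exact Submodule.smul_mem N _ hDB
end
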